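/- Let G be a countable discrete group acting partially on the Cantor set X (a nonempty compact, totally disconnected, perfect metrizable space) with each X_t clopen. Then the envelope space X^e is Hausdorff, locally compact, second countable with a basis of clopen sets, and has no isolated points. -/
import Mathlib


/-- A partial action of a group `G` on a set `X`. -/
structure PartialAction (G : Type*) [Group G] (X : Type*) where
  dom : G → Set X
  h : G → X → X
  dom_one : dom 1 = Set.univ
  h_one : ∀ x, h 1 x = x
  bijOn : ∀ t, Set.BijOn (h t) (dom t⁻¹) (dom t)
  image_inter : ∀ t s, h t '' (dom t⁻¹ ∩ dom s) = dom t ∩ dom (t * s)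
  hcomp : ∀ t s x, x ∈ dom s⁻¹ ∩ dom (s⁻¹ * t⁻¹) → h t (h s x) = h (t * s) x

/-- A topological partial action: the domains are open and each `h t` is a homeomorphism
of `X_{t⁻¹}` onto `X_t` (continuity of the inverse is `continuousOn t⁻¹`). -/
structure TopPartialAction (G : Type*) [Group G] (X : Type*) [TopologicalSpace X]
    extends PartialAction G X where
  isOpen_dom : ∀ t, IsOpen (dom t)
  continuousOn : ∀ t, ContinuousOn (h t) (dom t⁻¹)

/-- The relation `(r,x) ∼ (s,y) ↔ x ∈ X_{r⁻¹s} ∧ h_{s⁻¹r}(x) = y`. -/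
def PartialAction.rel {G X : Type*} [Group G] (θ : PartialAction G X) :
    G × X → G × X → Prop :=
  fun p q => p.2 ∈ θ.dom (p.1⁻¹ * q.1) ∧ θ.h (q.1⁻¹ * p.1) p.2 = q.2

/-- For a partial action of a countable discrete group on the Cantor set (a nonempty
compact, totally disconnected, perfect metrizable space) with all domains clopen, the
envelope space is Hausdorff, locally compact, has a countable basis of clopen sets, and
has no isolated points. -/
theorem envelope_of_cantor_partialAction {G X : Type*} [Group G] [Countable G]
    [TopologicalSpace G] [DiscreteTopology G]
    [TopologicalSpace X] [CompactSpace X] [T2Space X] [TotallyDisconnectedSpace X]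
    [TopologicalSpace.MetrizableSpace X] [PerfectSpace X] [Nonempty X]
    (θ : TopPartialAction G X) (heq : Equivalence θ.toPartialAction.rel)
    (hclopen : ∀ t : G, IsClopen (θ.dom t)) :
    T2Space (Quotient (Setoid.mk θ.toPartialAction.rel heq)) ∧
    LocallyCompactSpace (Quotient (Setoid.mk θ.toPartialAction.rel heq)) ∧
    (∃ b : Set (Set (Quotient (Setoid.mk θ.toPartialAction.rel heq))),
      b.Countable ∧ (∀ s ∈ b, IsClopen s) ∧ TopologicalSpace.IsTopologicalBasis b) ∧
    (∀ q : Quotient (Setoid.mk θ.toPartialAction.rel heq), ¬ IsOpen ({q} :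
      Set (Quotient (Setoid.mk θ.toPartialAction.rel heq)))) := by
  classical
  set S : Setoid (G × X) := Setoid.mk θ.toPartialAction.rel heq with hS
  have hqm : Topology.IsQuotientMap (Quotient.mk S) := isQuotientMap_quot_mk
  have hcont : Continuous (Quotient.mk S) := hqm.continuous
  -- openness/closedness of "slice-wise" sets in `G × X`
  have sliceOpen : ∀ f : G → Set X, (∀ s, IsOpen (f s)) →
      IsOpen {p : G × X | p.2 ∈ f p.1} := by
    intro f hf
    have hrep : {p : G × X | p.2 ∈ f p.1} = ⋃ s : G, {s} ×ˢ f s := by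
      ext p
      constructor
      · intro hp
        exact Set.mem_iUnion.2 ⟨p.1, Set.mem_prod.2 ⟨rfl, hp⟩⟩
      · intro hp
        obtain ⟨s, hs⟩ := Set.mem_iUnion.1 hp
        obtain ⟨h1, h2⟩ := Set.mem_prod.1 hs
        have : p.1 = s := h1
        rw [← this] at h2
        exact h2
    rw [hrep]
    exact isOpen_iUnion fun s => (isOpen_discrete _).prod (hf s)
  have sliceClosed : ∀ f : G → Set X, (∀ s, IsClosed (f s)) →
      IsClosed {p : G × X | p.2 ∈ f p.1} := by
    intro f hf
    rw [← isOpen_compl_iff]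
    have : {p : G × X | p.2 ∈ f p.1}ᶜ = {p : G × X | p.2 ∈ (f p.1)ᶜ} := rfl
    rw [this]
    exact sliceOpen _ fun s => (hf s).isOpen_compl
  -- description of the saturation of `{t} ×ˢ U`
  have satEq : ∀ (t : G) (U : Set X),
      (Quotient.mk S) ⁻¹' (Quotient.mk S '' ({t} ×ˢ U)) =
      {p : G × X | p.2 ∈ θ.dom (p.1⁻¹ * t) ∩ θ.h (t⁻¹ * p.1) ⁻¹' U} := by
    intro t U
    ext p
    constructor
    · intro hp
      obtain ⟨b, hb, hbp⟩ := hp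
      obtain ⟨hb1, hb2⟩ := Set.mem_prod.1 hb
      have hb1' : b.1 = t := hb1
      have hr : θ.toPartialAction.rel p b := heq.symm (Quotient.exact hbp)
      obtain ⟨hr1, hr2⟩ := hr
      rw [hb1'] at hr1 hr2
      refine ⟨hr1, ?_⟩
      show θ.h (t⁻¹ * p.1) p.2 ∈ U
      rw [hr2]
      exact hb2
    · rintro ⟨h1, h2⟩
      have hrel : θ.toPartialAction.rel p (t, θ.h (t⁻¹ * p.1) p.2) := ⟨h1, rfl⟩
      exact ⟨(t, θ.h (t⁻¹ * p.1) p.2), Set.mem_prod.2 ⟨rfl, h2⟩,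
        (Quotient.sound (heq.symm hrel))⟩
  -- continuity of the partial homeomorphisms on the right domains
  have hcOn : ∀ s t : G, ContinuousOn (θ.h (t⁻¹ * s)) (θ.dom (s⁻¹ * t)) := by
    intro s t
    have := θ.continuousOn (t⁻¹ * s)
    rwa [mul_inv_rev, inv_inv] at this
  -- openness / clopenness of images of basic boxes
  have satOpen : ∀ (t : G) (U : Set X), IsOpen U →
      IsOpen (Quotient.mk S '' ({t} ×ˢ U)) := by
    intro t U hU
    rw [← hqm.isOpen_preimage, satEq]
    exact sliceOpen (fun s => θ.dom (s⁻¹ * t) ∩ θ.h (t⁻¹ * s) ⁻¹' U)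
      (fun s => (hcOn s t).isOpen_inter_preimage (hclopen _).isOpen hU)
  have satClosed : ∀ (t : G) (U : Set X), IsClopen U →
      IsClosed (Quotient.mk S '' ({t} ×ˢ U)) := by
    intro t U hU
    rw [← hqm.isClosed_preimage, satEq]
    exact sliceClosed (fun s => θ.dom (s⁻¹ * t) ∩ θ.h (t⁻¹ * s) ⁻¹' U)
      (fun s => (hcOn s t).preimage_isClosed_of_isClosed (hclopen _).isClosed hU.isClosed)
  -- Hausdorff
  have hT2 : T2Space (Quotient S) := by
    constructor
    intro a b hab
    obtain ⟨⟨t, x⟩, rfl⟩ := Quotient.exists_rep a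
    obtain ⟨⟨s, y⟩, rfl⟩ := Quotient.exists_rep b
    have hnr : ¬ θ.toPartialAction.rel (t, x) (s, y) := fun hr => hab (Quotient.sound hr)
    have hKc : IsClosed (θ.dom (t⁻¹ * s) ∩ θ.h (s⁻¹ * t) ⁻¹' {y}) :=
      (hcOn t s).preimage_isClosed_of_isClosed (hclopen _).isClosed isClosed_singleton
    have hxK : x ∈ (θ.dom (t⁻¹ * s) ∩ θ.h (s⁻¹ * t) ⁻¹' {y})ᶜ := by
      intro hxk
      exact hnr ⟨hxk.1, hxk.2⟩
    obtain ⟨U, hUc, hxU, hUK⟩ := compact_exists_isClopen_in_isOpen hKc.isOpen_compl hxK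
    refine ⟨Quotient.mk S '' ({t} ×ˢ U), (Quotient.mk S '' ({t} ×ˢ U))ᶜ,
      satOpen t U hUc.isOpen, (satClosed t U hUc).isOpen_compl,
      ⟨(t, x), Set.mem_prod.2 ⟨rfl, hxU⟩, rfl⟩, ?_, disjoint_compl_right⟩
    intro hmem
    have hpre : (s, y) ∈ Quotient.mk S ⁻¹' (Quotient.mk S '' ({t} ×ˢ U)) := hmem
    rw [satEq] at hpre
    obtain ⟨h1, h2⟩ := hpre
    have hrel : θ.toPartialAction.rel (s, y) (t, θ.h (t⁻¹ * s) y) := ⟨h1, rfl⟩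
    have hsymm := heq.symm hrel
    exact hUK h2 ⟨hsymm.1, hsymm.2⟩
  -- weakly locally compact, hence locally compact
  have hWLC : WeaklyLocallyCompactSpace (Quotient S) := by
    constructor
    intro a
    obtain ⟨⟨t, x⟩, rfl⟩ := Quotient.exists_rep a
    refine ⟨Quotient.mk S '' ({t} ×ˢ (Set.univ : Set X)),
      (isCompact_singleton.prod isCompact_univ).image hcont, ?_⟩
    exact (satOpen t Set.univ isOpen_univ).mem_nhds
      ⟨(t, x), Set.mem_prod.2 ⟨rfl, trivial⟩, rfl⟩
  have hLC : LocallyCompactSpace (Quotient S) := by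
    haveI := hT2
    haveI := hWLC
    exact WeaklyLocallyCompactSpace.locallyCompactSpace
  -- countable clopen basis
  haveI hSC : SecondCountableTopology X := by
    letI := TopologicalSpace.metrizableSpaceMetric X
    infer_instance
  have hclct : Set.Countable {U : Set X | IsClopen U} := by
    haveI : Countable (TopologicalSpace.Clopens X) :=
      (TopologicalSpace.Clopens.countable_iff_secondCountable).2 inferInstance
    have : Countable {U : Set X | IsClopen U} :=
      Countable.of_equiv (TopologicalSpace.Clopens X)
        ⟨fun c => ⟨c.carrier, c.isClopen'⟩, fun u => ⟨u.1, u.2⟩,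
          fun c => rfl, fun u => rfl⟩
    exact Set.countable_coe_iff.mp this
  have hbasis : ∃ b : Set (Set (Quotient S)),
      b.Countable ∧ (∀ s ∈ b, IsClopen s) ∧ TopologicalSpace.IsTopologicalBasis b := by
    refine ⟨(fun p : G × Set X => Quotient.mk S '' ({p.1} ×ˢ p.2)) ''
      ((Set.univ : Set G) ×ˢ {U : Set X | IsClopen U}), ?_, ?_, ?_⟩
    · exact ((Set.countable_univ).prod hclct).image _
    · rintro v ⟨⟨t, U⟩, ⟨-, hU⟩, rfl⟩
      exact ⟨satClosed t U hU, satOpen t U hU.isOpen⟩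
    · refine TopologicalSpace.isTopologicalBasis_of_isOpen_of_nhds ?_ ?_
      · rintro v ⟨⟨t, U⟩, ⟨-, hU⟩, rfl⟩
        exact satOpen t U hU.isOpen
      · intro a O haO hO
        obtain ⟨⟨t, x⟩, rfl⟩ := Quotient.exists_rep a
        have hpre : IsOpen (Quotient.mk S ⁻¹' O) := hO.preimage hcont
        have hslice : IsOpen {x' : X | (t, x') ∈ Quotient.mk S ⁻¹' O} :=
          hpre.preimage (Continuous.prodMk_right t)
        have hx : x ∈ {x' : X | (t, x') ∈ Quotient.mk S ⁻¹' O} := haO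
        obtain ⟨U, hUc, hxU, hUs⟩ := compact_exists_isClopen_in_isOpen hslice hx
        refine ⟨Quotient.mk S '' ({t} ×ˢ U), ⟨(t, U), ⟨trivial, hUc⟩, rfl⟩,
          ⟨(t, x), Set.mem_prod.2 ⟨rfl, hxU⟩, rfl⟩, ?_⟩
        rintro z ⟨⟨t', u⟩, hmem, rfl⟩
        obtain ⟨ht', hu⟩ := Set.mem_prod.1 hmem
        have ht'' : t' = t := ht'
        subst ht''
        exact hUs hu
  -- no isolated points
  have hiso : ∀ q : Quotient S, ¬ IsOpen ({q} : Set (Quotient S)) := by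
    intro a ha
    obtain ⟨⟨t, x⟩, rfl⟩ := Quotient.exists_rep a
    have hpre : IsOpen (Quotient.mk S ⁻¹' {Quotient.mk S (t, x)}) := ha.preimage hcont
    have hslice : IsOpen {x' : X | (t, x') ∈ Quotient.mk S ⁻¹' {Quotient.mk S (t, x)}} :=
      hpre.preimage (Continuous.prodMk_right t)
    have heqset : {x' : X | (t, x') ∈ Quotient.mk S ⁻¹' {Quotient.mk S (t, x)}} = {x} := by
      ext x'
      simp only [Set.mem_preimage, Set.mem_singleton_iff, Set.mem_setOf_eq]
      constructor
      · intro hmk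
        have hr : θ.toPartialAction.rel (t, x') (t, x) := Quotient.exact hmk
        have h1 := hr.2
        have ht1 : t⁻¹ * t = 1 := by group
        rw [ht1, θ.h_one] at h1
        exact h1
      · rintro rfl
        rfl
    rw [heqset] at hslice
    exact not_isOpen_singleton x hslice
  exact ⟨hT2, hLC, hbasis, hiso⟩
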